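/- arXiv:2512.10460 — 4 statements merged into one kernel-verified Lean document; each statement's English description precedes it below -/
import Mathlib

section
/- Let g(x,p) = (1-px)² - p³(1-x)² + p³x²/3 for x ∈ [0,2] and p ∈ [0,1]. Then there exists a constant c₀ > 0 such that g(x,p)/x² ≥ c₀ for all x ∈ (0,2] and p ∈ [0,1]. -/
/-!
Write `g(x,p) = a x² - 2b x + c`. For `p ≤ 11/20` we have `2b ≤ c`, so `g(x,p)/x²`, a quadratic
in `1/x ≥ 1/2` with vertex `b/c ≤ 1/2`, is smallest at `x = 2`, and `g(2,p)/4 = ((1-2p)² + p³/3)/4`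
stays above `1/105`. For `p ≥ 11/20` the quadratic `(a - 1/105) x² - 2b x + c` has nonpositive
discriminant.
-/

noncomputable section

def g (x p : ℝ) : ℝ := (1 - p*x)^2 - p^3*(1 - x)^2 + p^3*x^2/3

def gA (p : ℝ) : ℝ := p^2 * (1 - 2*p/3)

def gB (p : ℝ) : ℝ := p * (1 - p^2)

def gC (p : ℝ) : ℝ := 1 - p^3

end

lemma g_eq_quadratic (x p : ℝ) : g x p = gA p * x^2 - 2 * gB p * x + gC p := by
  unfold g gA gB gC
  ring

lemma g_two (p : ℝ) : g 2 p = 4 * gA p - 4 * gB p + gC p := by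
  rw [g_eq_quadratic]
  ring

lemma quadratic_ge_value_at_two_mul_sq {a b c x : ℝ} (hc : 0 ≤ c) (hbc : 2 * b ≤ c)
    (hx0 : 0 ≤ x) (hx2 : x ≤ 2) :
    (4*a - 4*b + c) / 4 * x^2 ≤ a * x^2 - 2 * b * x + c := by
  have key : 0 ≤ (2 - x) * (c * (2 + x) / 4 - b * x) := by
    apply mul_nonneg (by linarith)
    nlinarith [mul_nonneg hx0 (sub_nonneg.2 hbc), mul_nonneg hc (sub_nonneg.2 hx2)]
  linarith

lemma quadratic_nonneg_of_sq_le {a b c : ℝ} (ha : 0 < a) (hdisc : b^2 ≤ a * c) (x : ℝ) :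
    0 ≤ a * x^2 - 2 * b * x + c := by
  have : 0 ≤ a * (a * x^2 - 2 * b * x + c) := by nlinarith [sq_nonneg (a * x - b)]
  exact nonneg_of_mul_nonneg_right (by linarith) ha

lemma gC_nonneg {p : ℝ} (hp0 : 0 ≤ p) (hp1 : p ≤ 1) : 0 ≤ gC p := by
  unfold gC
  nlinarith [pow_le_one₀ hp0 hp1 (n := 3)]

/-- The threshold `p² + p ≤ 1` is `p ≤ (√5 - 1)/2`. -/
lemma two_mul_gB_le_gC {p : ℝ} (hp1 : p ≤ 1) (hp : p^2 + p ≤ 1) : 2 * gB p ≤ gC p := by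
  have : 2 * gB p - gC p = -((1 - p) * (1 - p - p^2)) := by
    unfold gB gC
    ring
  nlinarith [mul_nonneg (sub_nonneg.2 hp1) (by linarith : 0 ≤ 1 - p - p^2)]

/-- `g(2,p) = (1-2p)² + p³/3` has its minimum on `p ≥ 0` near `p ≈ 0.472`, just above `4/105`. -/
lemma four_div_105_le_g_two {p : ℝ} (hp0 : 0 ≤ p) : 4/105 ≤ g 2 p := by
  unfold g
  nlinarith [sq_nonneg (p - 472/1000), mul_nonneg hp0 (sq_nonneg (p - 472/1000))]

lemma gB_sq_le {p : ℝ} (hp : 11/20 ≤ p) (hp1 : p ≤ 1) :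
    gB p ^ 2 ≤ (gA p - 1/105) * gC p := by
  unfold gA gB gC
  nlinarith [sq_nonneg (1-p), sq_nonneg p, mul_nonneg (sub_nonneg.2 hp) (sub_nonneg.2 hp1),
    mul_nonneg (mul_nonneg (sub_nonneg.2 hp) (sub_nonneg.2 hp)) (sub_nonneg.2 hp1),
    mul_nonneg (sub_nonneg.2 hp) (sq_nonneg (1-p)), sq_nonneg ((1-p)*(p-11/20))]

lemma inv_105_lt_gA {p : ℝ} (hp : 11/20 ≤ p) (hp1 : p ≤ 1) : 1/105 < gA p := by
  unfold gA
  nlinarith [mul_le_mul hp hp (by norm_num) (by linarith)]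

lemma inv_105_mul_sq_le_g {x p : ℝ} (hx0 : 0 ≤ x) (hx2 : x ≤ 2) (hp0 : 0 ≤ p) (hp1 : p ≤ 1) :
    1/105 * x^2 ≤ g x p := by
  rw [g_eq_quadratic]
  rcases le_or_gt p (11/20) with hp | hp
  · have hbc : 2 * gB p ≤ gC p := two_mul_gB_le_gC hp1 (by nlinarith)
    calc 1/105 * x^2 ≤ (4 * gA p - 4 * gB p + gC p) / 4 * x^2 := by
          rw [← g_two]
          exact mul_le_mul_of_nonneg_right (by linarith [four_div_105_le_g_two hp0])
            (sq_nonneg x)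
      _ ≤ _ := quadratic_ge_value_at_two_mul_sq (gC_nonneg hp0 hp1) hbc hx0 hx2
  · have := quadratic_nonneg_of_sq_le (sub_pos.2 (inv_105_lt_gA hp.le hp1)) (gB_sq_le hp.le hp1) x
    linarith

/-- For `g(x,p) = (1-px)² - p³(1-x)² + p³x²/3`, there is a constant `c₀ > 0` such that
`g(x,p)/x² ≥ c₀` for all `x ∈ (0,2]` and `p ∈ [0,1]`. -/
theorem g_div_sq_lower_bound :
    ∃ c₀ : ℝ, 0 < c₀ ∧
      ∀ x ∈ Set.Ioc (0:ℝ) 2, ∀ p ∈ Set.Icc (0:ℝ) 1,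
        c₀ ≤ ((1 - p*x)^2 - p^3*(1 - x)^2 + p^3*x^2/3) / x^2 := by
  refine ⟨1/105, by norm_num, ?_⟩
  rintro x ⟨hx0, hx2⟩ p ⟨hp0, hp1⟩
  rw [le_div_iff₀ (by positivity)]
  exact inv_105_mul_sq_le_g hx0.le hx2 hp0 hp1
end

section
/- For p ∈ [0, (√5-1)/2], the quantity (1/4)(p³/3 + (1-2p)²) is bounded below by a positive constant; and for p ∈ ((√5-1)/2, 1], the quantity p²(1 - 2p/3 - (1-p²)(1+p)/(1+p+p²)) is bounded below by a positive constant. -/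
/-- The two case expressions in the minimisation of `g(x,p)/x²` are each bounded below
by a positive constant: `(1/4)(p³/3 + (1-2p)²)` for `p ∈ [0,(√5-1)/2]`, and
`p²(1 - 2p/3 - (1-p²)(1+p)/(1+p+p²))` for `p ∈ ((√5-1)/2, 1]`. -/
theorem two_case_expressions_lower_bound :
    (∃ c₁ : ℝ, 0 < c₁ ∧
      ∀ p ∈ Set.Icc (0:ℝ) ((Real.sqrt 5 - 1)/2),
        c₁ ≤ (1/4) * (p^3/3 + (1 - 2*p)^2)) ∧
    (∃ c₂ : ℝ, 0 < c₂ ∧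
      ∀ p ∈ Set.Ioc ((Real.sqrt 5 - 1)/2) (1:ℝ),
        c₂ ≤ p^2 * (1 - 2*p/3 - (1 - p^2)*(1 + p)/(1 + p + p^2))) := by
  have h5 : (2.236:ℝ) < Real.sqrt 5 := by
    rw [show (2.236:ℝ) = Real.sqrt (2.236^2) by rw [Real.sqrt_sq]; norm_num]
    exact Real.sqrt_lt_sqrt (by positivity) (by norm_num)
  constructor
  · refine ⟨1/200, by norm_num, fun p hp => ?_⟩
    obtain ⟨hp0, hp1⟩ := hp
    nlinarith [mul_nonneg hp0 (sq_nonneg (p - 0.47)), sq_nonneg (p - 0.47), sq_nonneg (1 - 2*p)]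
  · refine ⟨3/100, by norm_num, fun p hp => ?_⟩
    obtain ⟨hp0, hp1⟩ := hp
    have hp0' : (0.618:ℝ) < p := by nlinarith
    have hD : (0:ℝ) < 3*(1 + p + p^2) := by nlinarith
    have key : p^2 * (1 - 2*p/3 - (1 - p^2)*(1 + p)/(1 + p + p^2))
        = (p^2*((3 - 2*p)*(1 + p + p^2) - 3*(1 - p^2)*(1 + p)))/(3*(1 + p + p^2)) := by
      field_simp
    rw [key, le_div_iff₀ hD]
    have h618 : (0:ℝ) ≤ p - 0.618 := by linarith
    have h1p : (0:ℝ) ≤ 1 - p := by linarith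
    nlinarith [mul_nonneg h618 h1p, mul_nonneg (mul_nonneg h618 h1p) h618, mul_nonneg (mul_nonneg h618 h1p) h1p, sq_nonneg (p - 0.618), mul_nonneg (mul_nonneg h618 h618) h618, mul_nonneg (mul_nonneg (mul_nonneg h618 h618) h618) h618]
end

section
/- Let f(z) = Ai'(z)² - z Ai(z)² and define F(z) = (z³/2 + 1/8) Ai(z)⁴ - (z/2) Ai(z)³ Ai'(z) - z² Ai(z)² Ai'(z)² + (1/2) Ai(z) Ai'(z)³ + (z/2) Ai'(z)⁴. Then F'(z) = f(z)² for all real z. -/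
/-- With `f(z) = Ai'(z)² - z Ai(z)²` and
`F(z) = (z³/2 + 1/8)Ai⁴ - (z/2)Ai³Ai' - z²Ai²Ai'² + (1/2)AiAi'³ + (z/2)Ai'⁴`,
one has `F'(z) = f(z)²`, where `Ai'' = z Ai`. -/
theorem deriv_F_eq_f_sq (Ai : ℝ → ℝ)
    (hAi₁ : Differentiable ℝ Ai) (hAi₂ : Differentiable ℝ (deriv Ai))
    (hode : ∀ z, deriv (deriv Ai) z = z * Ai z) :
    ∀ z : ℝ,
      deriv (fun w => (w^3/2 + 1/8) * (Ai w)^4 - (w/2) * (Ai w)^3 * deriv Ai w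
          - w^2 * (Ai w)^2 * (deriv Ai w)^2 + (1/2) * Ai w * (deriv Ai w)^3
          + (w/2) * (deriv Ai w)^4) z
        = ((deriv Ai z)^2 - z * (Ai z)^2)^2 := by
  intro z
  have hA : HasDerivAt Ai (deriv Ai z) z := (hAi₁ z).hasDerivAt
  have hB : HasDerivAt (deriv Ai) (z * Ai z) z := hode z ▸ (hAi₂ z).hasDerivAt
  have hid : HasDerivAt (fun w : ℝ => w) 1 z := hasDerivAt_id z
  have h1 := (((hasDerivAt_pow 3 z).div_const 2).add_const (1/8)).mul (hA.pow 4)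
  have h2 := ((hid.div_const 2).mul (hA.pow 3)).mul hB
  have h3 := ((hasDerivAt_pow 2 z).mul (hA.pow 2)).mul (hB.pow 2)
  have h4 := ((hA.const_mul (1/2 : ℝ))).mul (hB.pow 3)
  have h5 := (hid.div_const 2).mul (hB.pow 4)
  have H := ((((h1.sub h2).sub h3).add h4).add h5)
  refine H.deriv.trans ?_
  simp only [Pi.mul_apply, Pi.pow_apply]
  push_cast
  ring
end

section
/- Let f(z) = Ai'(z)² - z Ai(z)², g(z) = Ai'(z)Bi'(z) - z Ai(z)Bi(z), and define G(z) = [(z³/2 + 1/8)Ai(z)³ - (3z/8)Ai(z)²Ai'(z) - (z²/2)Ai(z)Ai'(z)² + (1/8)Ai'(z)³] Bi(z) + [-(z/8)Ai(z)³ - (z²/2)Ai(z)²Ai'(z) + (3/8)Ai(z)Ai'(z)² + (z/2)Ai'(z)³] Bi'(z). Then G'(z) = f(z) g(z) for all real z. -/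
/-- With `f(z) = Ai'(z)² - z Ai(z)²`, `g(z) = Ai'(z)Bi'(z) - z Ai(z)Bi(z)` and `G` as below,
one has `G'(z) = f(z)g(z)`, where `Ai'' = z Ai` and `Bi'' = z Bi`. -/
theorem deriv_G_eq_f_mul_g (Ai Bi : ℝ → ℝ)
    (hAi₁ : Differentiable ℝ Ai) (hAi₂ : Differentiable ℝ (deriv Ai))
    (hBi₁ : Differentiable ℝ Bi) (hBi₂ : Differentiable ℝ (deriv Bi))
    (hAiode : ∀ z, deriv (deriv Ai) z = z * Ai z)
    (hBiode : ∀ z, deriv (deriv Bi) z = z * Bi z)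
    (hW : ∀ z, Ai z * deriv Bi z - deriv Ai z * Bi z = 1 / Real.pi) :
    ∀ z : ℝ,
      deriv (fun w =>
        ((w^3/2 + 1/8) * (Ai w)^3 - (3*w/8) * (Ai w)^2 * deriv Ai w
            - (w^2/2) * Ai w * (deriv Ai w)^2 + (1/8) * (deriv Ai w)^3) * Bi w
        + (-(w/8) * (Ai w)^3 - (w^2/2) * (Ai w)^2 * deriv Ai w
            + (3/8) * Ai w * (deriv Ai w)^2 + (w/2) * (deriv Ai w)^3) * deriv Bi w) z
        = ((deriv Ai z)^2 - z * (Ai z)^2) * (deriv Ai z * deriv Bi z - z * Ai z * Bi z) := by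
  intro z
  have hA : HasDerivAt Ai (deriv Ai z) z := (hAi₁ z).hasDerivAt
  have hA' : HasDerivAt (deriv Ai) (z * Ai z) z := by
    rw [← hAiode z]; exact (hAi₂ z).hasDerivAt
  have hB : HasDerivAt Bi (deriv Bi z) z := (hBi₁ z).hasDerivAt
  have hB' : HasDerivAt (deriv Bi) (z * Bi z) z := by
    rw [← hBiode z]; exact (hBi₂ z).hasDerivAt
  have hid : HasDerivAt (fun w : ℝ => w) 1 z := hasDerivAt_id z
  have h1 : HasDerivAt (fun w : ℝ => w^3/2 + 1/8) ((3:ℝ) * z^2 / 2) z := by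
    simpa using ((hasDerivAt_pow 3 z).div_const 2).add_const (1/8 : ℝ)
  have h2 : HasDerivAt (fun w : ℝ => 3*w/8) ((3:ℝ)/8) z := by
    simpa using (hid.const_mul (3:ℝ)).div_const 8
  have h3 : HasDerivAt (fun w : ℝ => w^2/2) z z := by
    simpa using (hasDerivAt_pow 2 z).div_const 2
  have h4 : HasDerivAt (fun w : ℝ => -(w/8)) (-(1/8 : ℝ)) z := by
    exact (hid.div_const 8).neg
  have h5 : HasDerivAt (fun w : ℝ => w/2) ((1:ℝ)/2) z := hid.div_const 2
  have hP1 := (((h1.mul (hA.pow 3)).sub ((h2.mul (hA.pow 2)).mul hA')).sub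
      ((h3.mul hA).mul (hA'.pow 2))).add ((hA'.pow 3).const_mul (1/8 : ℝ))
  have hP2 := (((h4.mul (hA.pow 3)).sub ((h3.mul (hA.pow 2)).mul hA')).add
      ((hA.const_mul (3/8 : ℝ)).mul (hA'.pow 2))).add (h5.mul (hA'.pow 3))
  have H := (hP1.mul hB).add (hP2.mul hB')
  erw [H.deriv]
  simp only [Pi.mul_apply, Pi.pow_apply, Pi.add_apply, Pi.sub_apply]
  push_cast
  ring
end
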